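/- Let n ≥ 3, let Ω ⊆ ℝⁿ be open, let C₁,…,C_{n−2}, H : Ω → ℝ be C² functions, let ν : Ω → ℝ be a nowhere-vanishing C¹ function, let X = ν·V be the rescaled Nambu vector field, and set Φ = (1/ν, C₁/ν, …, C_{n−2}/ν, H/ν). If at a point x ∈ Ω one has div X(x)·∂(1/ν, C₁, …, C_{n−2}, H)/∂(x₁,…,xₙ)(x) ≠ 0, then the derivative DΦ(x) is invertible; consequently Φ is a local C¹ diffeomorphism in a neighborhood of x. -/

import Mathlib

/-!
Write `Φ = G / ν` with `G = (1, C₁, …, C_{n−2}, H)`. By the product rule the row `k ≥ 1` of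
`DΦ(x)` is `ν(x)⁻¹ DG_k(x) + G_k(x) D(1/ν)(x)`, while row `0` is `D(1/ν)(x)`. Hence `DΦ(x)` is a
lower triangular matrix with diagonal `(1, ν(x)⁻¹, …, ν(x)⁻¹)` times the Jacobian matrix of
`(1/ν, C₁, …, C_{n−2}, H)`, so `det DΦ(x) = ν(x)^{1−n} ∂(1/ν, C₁, …, C_{n−2}, H)/∂(x₁,…,xₙ)(x) ≠ 0`,
and the `C¹` inverse function theorem applies.
-/

/-- Jacobian determinant `∂(f₁,…,fₙ)/∂(x₁,…,xₙ)(x)` of a family of `n` scalar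
functions on `ℝⁿ`: the determinant of the matrix with `(i,j)` entry `∂fᵢ/∂xⱼ(x)`. -/
noncomputable def jacDet (n : ℕ) (f : Fin n → (Fin n → ℝ) → ℝ) (x : Fin n → ℝ) : ℝ :=
  (Matrix.of fun i j => fderiv ℝ (f i) x (Pi.single j 1)).det

/-- The Nambu vector field associated to `C₁,…,C_{n−2}, H`:
`Vᵢ(x) = ∂(C₁,…,C_{n−2}, πᵢ, H)/∂(x₁,…,xₙ)(x)`. -/
noncomputable def nambuVF (n : ℕ) (C : Fin (n - 2) → (Fin n → ℝ) → ℝ)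
    (H : (Fin n → ℝ) → ℝ) (x : Fin n → ℝ) (i : Fin n) : ℝ :=
  jacDet n (fun k => if hk : (k : ℕ) < n - 2 then C ⟨k, hk⟩
    else if (k : ℕ) = n - 2 then (fun y => y i) else H) x

/-- The divergence of a vector field: `div X(x) = trace (DX(x))`. -/
noncomputable def divergence (n : ℕ) (X : (Fin n → ℝ) → (Fin n → ℝ))
    (x : Fin n → ℝ) : ℝ :=
  LinearMap.trace ℝ (Fin n → ℝ) (fderiv ℝ X x).toLinearMap

/-- The map `Φ = (1/ν, C₁/ν, …, C_{n−2}/ν, H/ν) : ℝⁿ → ℝⁿ`. -/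
noncomputable def phiMap (n : ℕ) (C : Fin (n - 2) → (Fin n → ℝ) → ℝ)
    (H ν : (Fin n → ℝ) → ℝ) (x : Fin n → ℝ) (k : Fin n) : ℝ :=
  (if (k : ℕ) = 0 then 1
    else if hk : (k : ℕ) - 1 < n - 2 then C ⟨(k : ℕ) - 1, hk⟩ x else H x) / ν x

open Set

namespace Matrix

theorem det_of_ite_row_zero {R : Type*} [CommRing R] {n : ℕ} [NeZero n]
    (N : Matrix (Fin n) (Fin n) R) (a : R) (c : Fin n → R) :
    (of fun i j => if i = 0 then N 0 j else a * N i j + c i * N 0 j).det =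
      a ^ (n - 1) * N.det := by
  let L : Matrix (Fin n) (Fin n) R :=
    of fun i k => if k = i then (if i = 0 then 1 else a) else if k = 0 then c i else 0
  have hLN : (of fun i j => if i = 0 then N 0 j else a * N i j + c i * N 0 j) = L * N := by
    ext i j
    by_cases hi : i = 0
    · simp [L, mul_apply, hi, ite_mul, Finset.sum_ite, Finset.filter_eq', Finset.filter_ne']
    · simp [L, mul_apply, hi, Ne.symm hi, ite_mul, Finset.sum_ite, Finset.filter_eq',
        Finset.filter_ne']
  have hL : L.IsLowerTriangular := fun i k (hik : i < k) => by
    simp [L, hik.ne', (hik.trans_le' (Fin.zero_le i)).ne']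
  rw [hLN, det_mul, det_of_isLowerTriangular L hL]
  simp [L, Finset.prod_ite, Finset.filter_ne']

end Matrix

section Jacobian

variable {𝕜 : Type*} [NontriviallyNormedField 𝕜] {m n : ℕ}

noncomputable def jacobianMatrix (f : (Fin n → 𝕜) → Fin m → 𝕜) (x : Fin n → 𝕜) :
    Matrix (Fin m) (Fin n) 𝕜 :=
  Matrix.of fun i j => fderiv 𝕜 (fun y => f y i) x (Pi.single j 1)

theorem jacobianMatrix_eq_toMatrix' {f : (Fin n → 𝕜) → Fin m → 𝕜} {x : Fin n → 𝕜}
    (hf : DifferentiableAt 𝕜 f x) :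
    jacobianMatrix f x = LinearMap.toMatrix' (fderiv 𝕜 f x : (Fin n → 𝕜) →ₗ[𝕜] Fin m → 𝕜) := by
  ext i j
  simp [jacobianMatrix, fderiv_apply hf]

theorem det_fderiv_eq_det_jacobianMatrix {f : (Fin n → 𝕜) → Fin n → 𝕜} {x : Fin n → 𝕜}
    (hf : DifferentiableAt 𝕜 f x) : (fderiv 𝕜 f x).det = (jacobianMatrix f x).det := by
  rw [jacobianMatrix_eq_toMatrix' hf, LinearMap.det_toMatrix']

theorem det_jacobianMatrix_div [NeZero n] {ν : (Fin n → 𝕜) → 𝕜}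
    {G : Fin n → (Fin n → 𝕜) → 𝕜} {x : Fin n → 𝕜} (hν : DifferentiableAt 𝕜 ν x)
    (hν0 : ν x ≠ 0) (hG : ∀ k ≠ 0, DifferentiableAt 𝕜 (G k) x) :
    (jacobianMatrix (fun y k => (if k = 0 then 1 else G k y) / ν y) x).det =
      (ν x)⁻¹ ^ (n - 1) *
        (jacobianMatrix (fun y k => if k = 0 then (ν y)⁻¹ else G k y) x).det := by
  rw [← Matrix.det_of_ite_row_zero _ _ (fun i => G i x)]
  congr 1
  ext i j
  by_cases hi : i = 0
  · simp [jacobianMatrix, hi]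
  · simp only [jacobianMatrix, hi, if_false, if_true, Matrix.of_apply, div_eq_mul_inv]
    rw [fderiv_fun_mul (d := fun y => (ν y)⁻¹) (hG i hi) (hν.inv hν0)]
    simp only [add_apply, smul_apply, smul_eq_mul]
    ring

end Jacobian

theorem ContDiffOn.exists_local_inverse {𝕜 : Type*} [RCLike 𝕜] {E F : Type*}
    [NormedAddCommGroup E] [NormedSpace 𝕜 E] [CompleteSpace E]
    [NormedAddCommGroup F] [NormedSpace 𝕜 F] {r : WithTop ℕ∞} {f : E → F} {U : Set E} {x : E}
    (hf : ContDiffOn 𝕜 r f U) (hU : IsOpen U) (hx : x ∈ U) (hr : 1 ≤ r)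
    (hf' : fderiv 𝕜 f x ∈ range ((↑) : (E ≃L[𝕜] F) → E →L[𝕜] F)) :
    ∃ s : Set E, IsOpen s ∧ x ∈ s ∧ s ⊆ U ∧ IsOpen (f '' s) ∧ ContDiffOn 𝕜 r f s ∧
      ∃ g : F → E, ContDiffOn 𝕜 r g (f '' s) ∧ (∀ y ∈ s, g (f y) = y) ∧
        (∀ u ∈ f '' s, f (g u) = u) := by
  have hr0 : r ≠ 0 := (zero_lt_one.trans_le hr).ne'
  have hdiff : ∀ y ∈ U, HasFDerivAt f (fderiv 𝕜 f y) y := fun y hy =>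
    ((hf.contDiffAt (hU.mem_nhds hy)).differentiableAt hr0).hasFDerivAt
  -- `g` is `C^r` at `f y` only where `Df(y)` is invertible, an open condition
  set V := U ∩ fderiv 𝕜 f ⁻¹' range ((↑) : (E ≃L[𝕜] F) → E →L[𝕜] F)
  have hV : IsOpen V :=
    (hf.continuousOn_fderiv_of_isOpen hU hr).isOpen_inter_preimage hU ContinuousLinearEquiv.isOpen
  obtain ⟨e, he⟩ := hf'
  let P := (hf.contDiffAt (hU.mem_nhds hx)).toOpenPartialHomeomorph f (he ▸ hdiff x hx) hr0
  have hPs : ∀ y ∈ P.source, P.symm (f y) = y := fun y hy => P.left_inv hy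
  refine ⟨P.source ∩ V, P.open_source.inter hV,
    ⟨ContDiffAt.mem_toOpenPartialHomeomorph_source _ _ _, hx, e, he⟩,
    fun y hy => hy.2.1, P.isOpen_image_of_subset_source (P.open_source.inter hV)
      inter_subset_left, hf.mono fun y hy => hy.2.1, P.symm, ?_,
    fun y hy => hPs y hy.1, ?_⟩
  · rintro _ ⟨y, ⟨hyP, hyU, ey, hey⟩, rfl⟩
    refine (P.contDiffAt_symm (f₀' := ey) (P.map_source hyP) ?_ ?_).contDiffWithinAt
    · rw [P.left_inv hyP, hey]
      exact hdiff y hyU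
    · rw [P.left_inv hyP]
      exact hf.contDiffAt (hU.mem_nhds hyU)
  · rintro _ ⟨y, hy, rfl⟩
    rw [hPs y hy.1]

/-- `nambuComponents n C H k` is `C_k` for `1 ≤ k ≤ n − 2` and `H` for `k = n − 1`; the
entry `k = 0`, where `Φ` has `1/ν`, is irrelevant. -/
noncomputable def nambuComponents (n : ℕ) (C : Fin (n - 2) → (Fin n → ℝ) → ℝ)
    (H : (Fin n → ℝ) → ℝ) (k : Fin n) : (Fin n → ℝ) → ℝ :=
  if hk : (k : ℕ) - 1 < n - 2 then C ⟨(k : ℕ) - 1, hk⟩ else H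

section PhiMap

variable {n : ℕ} {C : Fin (n - 2) → (Fin n → ℝ) → ℝ} {H ν : (Fin n → ℝ) → ℝ}

theorem nambuComponents_of_forall {P : ((Fin n → ℝ) → ℝ) → Prop} (hC : ∀ j, P (C j))
    (hH : P H) (k : Fin n) : P (nambuComponents n C H k) := by
  unfold nambuComponents
  split_ifs
  exacts [hC _, hH]

theorem phiMap_eq [NeZero n] :
    phiMap n C H ν = fun y k => (if k = 0 then 1 else nambuComponents n C H k y) / ν y := by
  ext y k
  by_cases hk : k = 0
  · simp [phiMap, hk]
  · simp only [phiMap, nambuComponents, Fin.val_eq_zero_iff, hk, if_false]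
    split_ifs <;> rfl

theorem contDiffOn_phiMap [NeZero n] {r : WithTop ℕ∞} {Ω : Set (Fin n → ℝ)}
    (hG : ∀ k, ContDiffOn ℝ r (nambuComponents n C H k) Ω) (hν : ContDiffOn ℝ r ν Ω)
    (hν0 : ∀ x ∈ Ω, ν x ≠ 0) : ContDiffOn ℝ r (phiMap n C H ν) Ω := by
  rw [phiMap_eq]
  refine contDiffOn_pi.2 fun k => ContDiffOn.div ?_ hν hν0
  split_ifs
  exacts [contDiffOn_const, hG k]

theorem det_fderiv_phiMap [NeZero n] {x : Fin n → ℝ}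
    (hΦ : DifferentiableAt ℝ (phiMap n C H ν) x)
    (hG : ∀ k, DifferentiableAt ℝ (nambuComponents n C H k) x) (hν : DifferentiableAt ℝ ν x)
    (hν0 : ν x ≠ 0) :
    (fderiv ℝ (phiMap n C H ν) x).det = (ν x)⁻¹ ^ (n - 1) *
      jacDet n (fun k => if (k : ℕ) = 0 then (fun y => (ν y)⁻¹)
        else if hk : (k : ℕ) - 1 < n - 2 then C ⟨(k : ℕ) - 1, hk⟩ else H) x := by
  rw [det_fderiv_eq_det_jacobianMatrix hΦ, phiMap_eq,
    det_jacobianMatrix_div hν hν0 fun k _ => hG k]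
  congr 3
  ext y k
  simp only [nambuComponents, Fin.val_eq_zero_iff]
  split_ifs <;> rfl

end PhiMap

theorem stmt_11_general (n : ℕ) (hn : 3 ≤ n) (Ω : Set (Fin n → ℝ)) (hΩ : IsOpen Ω)
    (C : Fin (n - 2) → (Fin n → ℝ) → ℝ) (H : (Fin n → ℝ) → ℝ)
    (hC : ∀ j, ContDiffOn ℝ 2 (C j) Ω) (hH : ContDiffOn ℝ 2 H Ω)
    (ν : (Fin n → ℝ) → ℝ) (hν : ContDiffOn ℝ 1 ν Ω) (hν0 : ∀ x ∈ Ω, ν x ≠ 0)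
    -- `X = ν · V`, the rescaled Nambu vector field
    (X : (Fin n → ℝ) → (Fin n → ℝ))
    (x : Fin n → ℝ) (hx : x ∈ Ω)
    -- `div X(x) · ∂(1/ν, C₁, …, C_{n−2}, H)/∂(x₁,…,xₙ)(x) ≠ 0`
    (hnz : divergence n X x *
      jacDet n (fun k => if (k : ℕ) = 0 then (fun y => (ν y)⁻¹)
        else if hk : (k : ℕ) - 1 < n - 2 then C ⟨(k : ℕ) - 1, hk⟩ else H) x ≠ 0) :
    -- then `DΦ(x)` is invertible, and `Φ` is a local `C¹` diffeomorphism near `x`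
    Function.Bijective (fderiv ℝ (phiMap n C H ν) x) ∧
    ∃ s : Set (Fin n → ℝ), IsOpen s ∧ x ∈ s ∧ s ⊆ Ω ∧
      IsOpen (phiMap n C H ν '' s) ∧
      ContDiffOn ℝ 1 (phiMap n C H ν) s ∧
      ∃ Ψ : (Fin n → ℝ) → (Fin n → ℝ),
        ContDiffOn ℝ 1 Ψ (phiMap n C H ν '' s) ∧
        (∀ y ∈ s, Ψ (phiMap n C H ν y) = y) ∧
        (∀ u ∈ phiMap n C H ν '' s, phiMap n C H ν (Ψ u) = u) := by
  have : NeZero n := ⟨by omega⟩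
  have hdiff {f : (Fin n → ℝ) → ℝ} (hf : ContDiffOn ℝ 1 f Ω) : DifferentiableAt ℝ f x :=
    (hf.contDiffAt (hΩ.mem_nhds hx)).differentiableAt one_ne_zero
  have hG : ∀ k, ContDiffOn ℝ 1 (nambuComponents n C H k) Ω :=
    nambuComponents_of_forall (P := fun f => ContDiffOn ℝ 1 f Ω)
      (fun j => (hC j).of_le one_le_two) (hH.of_le one_le_two)
  have hΦ : ContDiffOn ℝ 1 (phiMap n C H ν) Ω := contDiffOn_phiMap hG hν hν0
  have hdet : (fderiv ℝ (phiMap n C H ν) x).det ≠ 0 := by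
    rw [det_fderiv_phiMap ((hΦ.contDiffAt (hΩ.mem_nhds hx)).differentiableAt one_ne_zero)
      (fun k => hdiff (hG k)) (hdiff hν) (hν0 x hx)]
    exact mul_ne_zero (pow_ne_zero _ (inv_ne_zero (hν0 x hx))) (right_ne_zero_of_mul hnz)
  let e := (fderiv ℝ (phiMap n C H ν) x).toContinuousLinearEquivOfDetNeZero hdet
  have he : (e : (Fin n → ℝ) →L[ℝ] Fin n → ℝ) = fderiv ℝ (phiMap n C H ν) x :=
    ContinuousLinearMap.coe_toContinuousLinearEquivOfDetNeZero _ hdet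
  exact ⟨he ▸ e.bijective, hΦ.exists_local_inverse hΩ hx le_rfl ⟨e, he⟩⟩

theorem stmt_11 (n : ℕ) (hn : 3 ≤ n) (Ω : Set (Fin n → ℝ)) (hΩ : IsOpen Ω)
    (C : Fin (n - 2) → (Fin n → ℝ) → ℝ) (H : (Fin n → ℝ) → ℝ)
    (hC : ∀ j, ContDiffOn ℝ 2 (C j) Ω) (hH : ContDiffOn ℝ 2 H Ω)
    (ν : (Fin n → ℝ) → ℝ) (hν : ContDiffOn ℝ 1 ν Ω) (hν0 : ∀ x ∈ Ω, ν x ≠ 0)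
    -- `X = ν · V`, the rescaled Nambu vector field
    (X : (Fin n → ℝ) → (Fin n → ℝ)) (hX : ∀ x, X x = ν x • nambuVF n C H x)
    (x : Fin n → ℝ) (hx : x ∈ Ω)
    -- `div X(x) · ∂(1/ν, C₁, …, C_{n−2}, H)/∂(x₁,…,xₙ)(x) ≠ 0`
    (hnz : divergence n X x *
      jacDet n (fun k => if (k : ℕ) = 0 then (fun y => (ν y)⁻¹)
        else if hk : (k : ℕ) - 1 < n - 2 then C ⟨(k : ℕ) - 1, hk⟩ else H) x ≠ 0) :
    -- then `DΦ(x)` is invertible, and `Φ` is a local `C¹` diffeomorphism near `x`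
    Function.Bijective (fderiv ℝ (phiMap n C H ν) x) ∧
    ∃ s : Set (Fin n → ℝ), IsOpen s ∧ x ∈ s ∧ s ⊆ Ω ∧
      IsOpen (phiMap n C H ν '' s) ∧
      ContDiffOn ℝ 1 (phiMap n C H ν) s ∧
      ∃ Ψ : (Fin n → ℝ) → (Fin n → ℝ),
        ContDiffOn ℝ 1 Ψ (phiMap n C H ν '' s) ∧
        (∀ y ∈ s, Ψ (phiMap n C H ν y) = y) ∧
        (∀ u ∈ phiMap n C H ν '' s, phiMap n C H ν (Ψ u) = u) :=
  stmt_11_general n hn Ω hΩ C H hC hH ν hν hν0 X x hx hnz
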